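/- arXiv:1407.3375 — 4 statements merged into one kernel-verified Lean document; each statement's English description precedes it below -/
import Mathlib

section
/- Let A be the 2×2 matrix with entries A₁₁=A₂₂=2 and A₁₂=A₂₁=-a with a≥2, acting on ℤ² with simple reflections w₁(x,y) = (x - (2x - a y), y) = (-x + a y, y) and w₂(x,y) = (x, a x - y). Let α₁=(1,0), α₂=(0,1). Then there is no element w of the group generated by w₁ and w₂ with w(α₁)=α₂. -/
/-- The simple reflection `w₁` of the rank 2 generalized Cartan matrix
`[[2,-a],[-a,2]]`, acting on the root lattice `ℤ × ℤ`: `w₁(x,y) = (-x + a y, y)`. -/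
def w1 (a : ℤ) : Function.End (ℤ × ℤ) := fun p => (-p.1 + a * p.2, p.2)

/-- The simple reflection `w₂`: `w₂(x,y) = (x, a x - y)`. -/
def w2 (a : ℤ) : Function.End (ℤ × ℤ) := fun p => (p.1, a * p.1 - p.2)

/-- For `a ≥ 2`, no element of the Weyl group `W = ⟨w₁, w₂⟩` sends the simple root
`α₁ = (1,0)` to the simple root `α₂ = (0,1)`. -/
theorem no_weyl_element_sends_alpha1_to_alpha2 (a : ℤ) (ha : 2 ≤ a) :
    ¬ ∃ w ∈ Submonoid.closure ({w1 a, w2 a} : Set (Function.End (ℤ × ℤ))),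
      w ((1 : ℤ), (0 : ℤ)) = ((0 : ℤ), (1 : ℤ)) := by
  rintro ⟨w, hw, hα⟩
  have key : ∀ v : ℤ × ℤ, a ∣ v.2 → a ∣ (w v).2 := by
    refine Submonoid.closure_induction (motive := fun w _ => ∀ v : ℤ × ℤ, a ∣ v.2 → a ∣ (w v).2)
      ?_ ?_ ?_ hw
    · rintro x (rfl | rfl)
      · intro v hv; exact hv
      · intro v hv
        simpa [w2] using dvd_sub (Dvd.intro v.1 rfl) hv
    · intro v hv; exact hv
    · intro f g _ _ hf hg v hv
      exact hf (g v) (hg v hv)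
  have h1 : a ∣ ((1 : ℤ), (0 : ℤ)).2 := by simp
  have := key _ h1
  rw [hα] at this
  have : a ∣ 1 := this
  have h2 := Int.le_of_dvd one_pos this
  omega
end

section
/- With A = [[2,-a],[-a,2]], a≥2, let γₙ = (w₁w₂)ⁿ(-α₁). Then the first coordinate of γₙ is a strictly decreasing sequence of integers in n. -/
lemma invariant (a : ℤ) (ha : 2 ≤ a) (n : ℕ) :
    (((w1 a ∘ w2 a)^[n]) ((-1 : ℤ), (0 : ℤ))).1 ≤ -1 ∧
    (((w1 a ∘ w2 a)^[n]) ((-1 : ℤ), (0 : ℤ))).2 ≤ 0 ∧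
    (((w1 a ∘ w2 a)^[n]) ((-1 : ℤ), (0 : ℤ))).1 + 1 ≤
      (((w1 a ∘ w2 a)^[n]) ((-1 : ℤ), (0 : ℤ))).2 := by
  induction n with
  | zero => simp
  | succ n ih =>
    obtain ⟨h1, h2, h3⟩ := ih
    set p := ((w1 a ∘ w2 a)^[n]) ((-1 : ℤ), (0 : ℤ)) with hp
    rw [Function.iterate_succ_apply', ← hp]
    unfold w1 w2
    simp only [Function.comp_apply, w1, w2]
    refine ⟨?_, ?_, ?_⟩ <;> nlinarith [mul_nonneg (by nlinarith : (0:ℤ) ≤ a*(a-2)) (by linarith : (0:ℤ) ≤ -p.1),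
      mul_nonneg (by nlinarith : (0:ℤ) ≤ (a-2)*(a+1)) (by linarith : (0:ℤ) ≤ -p.1),
      mul_le_mul_of_nonneg_left h3 (by linarith : (0:ℤ) ≤ a-1),
      mul_le_mul_of_nonneg_left h3 (by linarith : (0:ℤ) ≤ a)]

/-- For `A = [[2,-a],[-a,2]]` with `a ≥ 2`, set `γₙ = (w₁w₂)ⁿ(-α₁)`. The first
coordinate `ρ₁(γₙ)` is a strictly decreasing sequence of integers. -/
theorem first_coord_strictly_decreasing (a : ℤ) (ha : 2 ≤ a)
    (γ : ℕ → ℤ × ℤ) (hγ : ∀ n, γ n = ((w1 a ∘ w2 a)^[n]) ((-1 : ℤ), (0 : ℤ))) :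
    ∀ n : ℕ, (γ (n + 1)).1 < (γ n).1 := by
  intro n
  obtain ⟨h1, h2, h3⟩ := invariant a ha n
  rw [hγ, hγ, Function.iterate_succ_apply']
  set p := ((w1 a ∘ w2 a)^[n]) ((-1 : ℤ), (0 : ℤ)) with hp
  unfold w1 w2
  simp only [Function.comp_apply, w1, w2]
  nlinarith [mul_nonneg (by nlinarith : (0:ℤ) ≤ a*(a-2)) (by linarith : (0:ℤ) ≤ -p.1),
      mul_nonneg (by nlinarith : (0:ℤ) ≤ (a-2)*(a+1)) (by linarith : (0:ℤ) ≤ -p.1),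
      mul_le_mul_of_nonneg_left h3 (by linarith : (0:ℤ) ≤ a-1),
      mul_le_mul_of_nonneg_left h3 (by linarith : (0:ℤ) ≤ a)]
end

section
/- Let A be a generalized Cartan matrix, and suppose w ∈ ⟨w_i, w_j⟩ satisfies w(αᵢ) = αⱼ for some i≠j. Then a_{ij} = a_{ji} = -1. -/
/-- The simple reflection `w_i` of the rank 2 generalized Cartan matrix
`[[2, a_{ij}],[a_{ji}, 2]]` on the sublattice `ℤαᵢ ⊕ ℤαⱼ ≅ ℤ²`:
`w_i(x,y) = (-x - a_{ij} y, y)`. -/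
def wi (aij : ℤ) : Function.End (ℤ × ℤ) := fun p => (-p.1 - aij * p.2, p.2)

/-- The simple reflection `w_j`: `w_j(x,y) = (x, -a_{ji} x - y)`. -/
def wj (aji : ℤ) : Function.End (ℤ × ℤ) := fun p => (p.1, -aji * p.1 - p.2)

/-- `x² mod aij` and `y² mod aji` are invariants of the monoid generated by `wi` and `wj`. -/
lemma sq_invariant (aij aji : ℤ) (w : Function.End (ℤ × ℤ))
    (hw : w ∈ Submonoid.closure ({wi aij, wj aji} : Set (Function.End (ℤ × ℤ)))) :
    ∀ p : ℤ × ℤ, aij ∣ (w p).1 ^ 2 - p.1 ^ 2 ∧ aji ∣ (w p).2 ^ 2 - p.2 ^ 2 := by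
  induction hw using Submonoid.closure_induction with
  | mem w hw =>
    intro p
    rcases hw with hw | hw
    · subst hw
      constructor
      · exact ⟨2 * p.1 * p.2 + aij * p.2 ^ 2, by simp [wi]; ring⟩
      · simp [wi]
    · subst hw
      constructor
      · simp [wj]
      · exact ⟨2 * p.2 * p.1 + aji * p.1 ^ 2, by simp [wj]; ring⟩
  | one =>
    intro p
    have h1 : (1 : Function.End (ℤ × ℤ)) p = p := rfl
    rw [h1]
    exact ⟨⟨0, by ring⟩, ⟨0, by ring⟩⟩
  | mul w v _ _ hw hv =>
    intro p
    have h1 : (w * v) p = w (v p) := rfl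
    rw [h1]
    constructor
    · have h3 := dvd_add (hw (v p)).1 (hv p).1
      rwa [sub_add_sub_cancel] at h3
    · have h3 := dvd_add (hw (v p)).2 (hv p).2
      rwa [sub_add_sub_cancel] at h3

/-- If some `w ∈ ⟨w_i, w_j⟩` satisfies `w(αᵢ) = αⱼ` (for `i ≠ j`), then the entries of
the generalized Cartan matrix satisfy `a_{ij} = a_{ji} = -1`. -/
theorem same_orbit_forces_A2 (aij aji : ℤ)
    (hij : aij ≤ 0) (hji : aji ≤ 0) (hzero : aij = 0 ↔ aji = 0)
    (h : ∃ w ∈ Submonoid.closure ({wi aij, wj aji} : Set (Function.End (ℤ × ℤ))),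
      w ((1 : ℤ), (0 : ℤ)) = ((0 : ℤ), (1 : ℤ))) :
    aij = -1 ∧ aji = -1 := by
  obtain ⟨w, hw, hact⟩ := h
  have h1 := (sq_invariant aij aji w hw ((1 : ℤ), (0 : ℤ))).1
  have h2 := (sq_invariant aij aji w hw ((1 : ℤ), (0 : ℤ))).2
  rw [hact] at h1 h2
  simp at h1 h2
  have hij1 : aij ∣ 1 := h1
  have hji1 : aji ∣ 1 := h2
  have := Int.isUnit_iff.mp (isUnit_of_dvd_one hij1)
  have := Int.isUnit_iff.mp (isUnit_of_dvd_one hji1)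
  omega
end

section
/- Let A be a generalized Cartan matrix whose skeleton D* (edges {i,j} with a_{ij}=a_{ji}=-1) has connected components with vertex sets J₁,...,J_t. Then the simple roots αᵢ and αⱼ lie in the same Weyl group orbit if and only if i and j lie in the same component J_s. -/
open Finset

def simpleRefl {l : ℕ} (A : Matrix (Fin l) (Fin l) ℤ) (i : Fin l) :
    Function.End (Fin l → ℤ) :=
  fun β => β - (∑ k, β k * A k i) • Pi.single i 1

namespace Skel

variable {l : ℕ} (A : Matrix (Fin l) (Fin l) ℤ)

/-- the standard basis vector -/
abbrev ee (p : Fin l) : Fin l → ℤ := Pi.single p 1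

/-- pairing of a vector with the `k`-th column of `A` (coroot evaluation) -/
def pr (β : Fin l → ℤ) (k : Fin l) : ℤ := ∑ q, β q * A q k

lemma sr_def (k : Fin l) (β : Fin l → ℤ) :
    simpleRefl A k β = β - pr A β k • ee k := rfl

lemma pr_add (β γ : Fin l → ℤ) (k : Fin l) :
    pr A (β + γ) k = pr A β k + pr A γ k := by
  simp [pr, add_mul, Finset.sum_add_distrib]

lemma pr_smul (c : ℤ) (β : Fin l → ℤ) (k : Fin l) :
    pr A (c • β) k = c * pr A β k := by
  simp [pr, Finset.mul_sum, mul_assoc]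

lemma pr_single (p : Fin l) (c : ℤ) (k : Fin l) :
    pr A (Pi.single p c) k = c * A p k := by
  rw [pr, Finset.sum_eq_single p]
  · simp
  · intro q _ hq; simp [Pi.single_eq_of_ne hq]
  · simp

lemma pr_ee (p k : Fin l) : pr A (ee p) k = A p k := by
  simp [pr_single]

lemma pr_sub (β γ : Fin l → ℤ) (k : Fin l) :
    pr A (β - γ) k = pr A β k - pr A γ k := by
  simp [pr, sub_mul, Finset.sum_sub_distrib]

lemma sr_add (k : Fin l) (x y : Fin l → ℤ) :
    simpleRefl A k (x + y) = simpleRefl A k x + simpleRefl A k y := by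
  simp only [sr_def, pr_add, add_smul]; abel

lemma sr_smul (k : Fin l) (c : ℤ) (x : Fin l → ℤ) :
    simpleRefl A k (c • x) = c • simpleRefl A k x := by
  simp only [sr_def, pr_smul, smul_sub, mul_smul]

lemma sr_sr (k : Fin l) (hdiag : A k k = 2) (x : Fin l → ℤ) :
    simpleRefl A k (simpleRefl A k x) = x := by
  simp only [sr_def, pr_sub, pr_smul, pr_ee, hdiag, sub_smul, smul_smul]
  module

/-- word action -/
def wp (ω : List (Fin l)) : Function.End (Fin l → ℤ) := (ω.map (simpleRefl A)).prod

lemma mul_app (f g : Function.End (Fin l → ℤ)) (x : Fin l → ℤ) : (f * g) x = f (g x) := rfl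

@[simp] lemma wp_nil : wp A ([] : List (Fin l)) = 1 := rfl

lemma wp_cons (c : Fin l) (ω : List (Fin l)) :
    wp A (c :: ω) = simpleRefl A c * wp A ω := by
  simp [wp]

lemma wp_append (χ ρ : List (Fin l)) : wp A (χ ++ ρ) = wp A χ * wp A ρ := by
  simp [wp]

lemma wp_singleton (c : Fin l) : wp A [c] = simpleRefl A c := by
  simp [wp]

lemma wp_add (ω : List (Fin l)) (x y : Fin l → ℤ) :
    wp A ω (x + y) = wp A ω x + wp A ω y := by
  induction ω with
  | nil => rfl
  | cons c ω ih => rw [wp_cons, mul_app, mul_app, mul_app, ih, sr_add]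

lemma wp_smul (ω : List (Fin l)) (c : ℤ) (x : Fin l → ℤ) :
    wp A ω (c • x) = c • wp A ω x := by
  induction ω with
  | nil => rfl
  | cons d ω ih => rw [wp_cons, mul_app, mul_app, ih, sr_smul]

variable {A}

lemma wp_rev_apply (hdiag : ∀ k, A k k = 2) (ω : List (Fin l)) (x : Fin l → ℤ) :
    wp A ω (wp A ω.reverse x) = x := by
  induction ω generalizing x with
  | nil => rfl
  | cons c ω ih =>
      have : (c :: ω).reverse = ω.reverse ++ [c] := by simp
      rw [this, wp_cons, wp_append, wp_singleton]
      simp only [mul_app]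
      rw [ih, sr_sr A c (hdiag c)]

lemma wp_rev_apply' (hdiag : ∀ k, A k k = 2) (ω : List (Fin l)) (x : Fin l → ℤ) :
    wp A ω.reverse (wp A ω x) = x := by
  have := wp_rev_apply hdiag ω.reverse x
  rwa [List.reverse_reverse] at this

lemma wp_inj (hdiag : ∀ k, A k k = 2) (ω : List (Fin l)) {x y : Fin l → ℤ}
    (h : wp A ω x = wp A ω y) : x = y := by
  have hx := wp_rev_apply' hdiag ω x
  have hy := wp_rev_apply' hdiag ω y
  rw [← hx, ← hy, h]

variable (A)

/-- matrix of a simple reflection -/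
def SM (k : Fin l) : Matrix (Fin l) (Fin l) ℤ :=
  Matrix.updateRow 1 k (fun p => (if p = k then 1 else 0) - A p k)

lemma SM_mulVec (k : Fin l) (β : Fin l → ℤ) :
    (SM A k).mulVec β = simpleRefl A k β := by
  funext q
  rcases eq_or_ne q k with rfl | hq
  · simp only [SM, Matrix.mulVec, Matrix.updateRow_self, dotProduct,
      sub_mul, Finset.sum_sub_distrib, ite_mul, one_mul, zero_mul]
    rw [Finset.sum_ite_eq' Finset.univ q β]
    simp [sr_def, pr, Pi.single_eq_same, mul_comm]
  · simp only [SM, Matrix.mulVec, Matrix.updateRow_ne hq, dotProduct,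
      Matrix.one_apply, ite_mul, one_mul, zero_mul]
    rw [Finset.sum_ite_eq Finset.univ q β]
    simp [sr_def, Pi.single_eq_of_ne hq]

lemma SM_det (k : Fin l) (hdiag : A k k = 2) : (SM A k).det = -1 := by
  have hrow : (fun p => (if p = k then 1 else 0) - A p k)
      = ∑ p, ((if p = k then 1 else 0) - A p k) • (1 : Matrix (Fin l) (Fin l) ℤ) p := by
    funext q
    simp only [Finset.sum_apply, Pi.smul_apply, Matrix.one_apply, smul_eq_mul]
    rw [Finset.sum_eq_single q]
    · simp
    · intro p _ hp; simp [hp]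
    · simp
  rw [SM, hrow, Matrix.det_updateRow_sum]
  simp [hdiag]

/-- matrix of a word -/
def matProd (ω : List (Fin l)) : Matrix (Fin l) (Fin l) ℤ := (ω.map (SM A)).prod

lemma matProd_mulVec (ω : List (Fin l)) (β : Fin l → ℤ) :
    (matProd A ω).mulVec β = wp A ω β := by
  induction ω generalizing β with
  | nil => exact Matrix.one_mulVec β
  | cons c ω ih =>
      have : matProd A (c :: ω) = SM A c * matProd A ω := by simp [matProd]
      rw [this, ← Matrix.mulVec_mulVec, ih, SM_mulVec, wp_cons, mul_app]

lemma matProd_det (ω : List (Fin l)) (hdiag : ∀ k, A k k = 2) :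
    (matProd A ω).det = (-1) ^ ω.length := by
  induction ω with
  | nil => simp [matProd]
  | cons c ω ih =>
      have : matProd A (c :: ω) = SM A c * matProd A ω := by simp [matProd]
      rw [this, Matrix.det_mul, ih, SM_det A c (hdiag c), List.length_cons, pow_succ]
      ring

variable {A}

lemma wp_parity (hdiag : ∀ k, A k k = 2) {ω ω' : List (Fin l)} (h : wp A ω = wp A ω') :
    Even ω.length ↔ Even ω'.length := by
  have hm : matProd A ω = matProd A ω' := by
    apply Matrix.ext
    intro q p
    have h1 : (matProd A ω).mulVec (ee p) = (matProd A ω').mulVec (ee p) := by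
      rw [matProd_mulVec, matProd_mulVec, h]
    rw [Matrix.mulVec_single, Matrix.mulVec_single] at h1
    have := congrFun h1 q
    simpa using this
  have hd := matProd_det A ω hdiag
  rw [hm, matProd_det A ω' hdiag] at hd
  rw [← neg_one_pow_eq_one_iff_even (R := ℤ) (by norm_num),
    ← neg_one_pow_eq_one_iff_even (R := ℤ) (by norm_num), hd]


section Length

variable (A)

/-- least length of a word over letters satisfying `P` representing `w` -/
noncomputable def llen (P : Fin l → Prop) (w : Function.End (Fin l → ℤ)) : ℕ :=
  sInf {n | ∃ ω : List (Fin l), (∀ c ∈ ω, P c) ∧ ω.length = n ∧ wp A ω = w}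

def Reach (P : Fin l → Prop) (w : Function.End (Fin l → ℤ)) : Prop :=
  ∃ ω : List (Fin l), (∀ c ∈ ω, P c) ∧ wp A ω = w

variable {A}

lemma llen_le {P : Fin l → Prop} {w : Function.End (Fin l → ℤ)} {ω : List (Fin l)}
    (hP : ∀ c ∈ ω, P c) (hw : wp A ω = w) : llen A P w ≤ ω.length :=
  Nat.sInf_le ⟨ω, hP, rfl, hw⟩

lemma exists_min_word {P : Fin l → Prop} {w : Function.End (Fin l → ℤ)}
    (h : Reach A P w) :
    ∃ ω : List (Fin l), (∀ c ∈ ω, P c) ∧ ω.length = llen A P w ∧ wp A ω = w := by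
  obtain ⟨ω, hP, hw⟩ := h
  exact Nat.sInf_mem (⟨ω.length, ω, hP, rfl, hw⟩ :
    Set.Nonempty {n | ∃ ω : List (Fin l), (∀ c ∈ ω, P c) ∧ ω.length = n ∧ wp A ω = w})

lemma llen_one (P : Fin l → Prop) : llen A P 1 = 0 :=
  Nat.le_zero.mp (llen_le (ω := []) (by simp) (by simp))

lemma eq_one_of_llen_eq_zero {P : Fin l → Prop} {w : Function.End (Fin l → ℤ)}
    (h : Reach A P w) (h0 : llen A P w = 0) : w = 1 := by
  obtain ⟨ω, _, hlen, hw⟩ := exists_min_word h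
  rw [h0] at hlen
  rw [List.length_eq_zero_iff] at hlen
  subst hlen; simpa using hw.symm

lemma llen_mul_le {P : Fin l → Prop} {u v : Function.End (Fin l → ℤ)}
    (hu : Reach A P u) (hv : Reach A P v) :
    llen A P (u * v) ≤ llen A P u + llen A P v := by
  obtain ⟨ωu, hPu, hlu, hu'⟩ := exists_min_word hu
  obtain ⟨ωv, hPv, hlv, hv'⟩ := exists_min_word hv
  have : wp A (ωu ++ ωv) = u * v := by rw [wp_append, hu', hv']
  have hle := llen_le (P := P) (by
    intro c hc
    rcases List.mem_append.mp hc with h | h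
    · exact hPu c h
    · exact hPv c h) this
  simpa [hlu, hlv] using hle

lemma llen_true_le {P : Fin l → Prop} {w : Function.End (Fin l → ℤ)}
    (h : Reach A P w) : llen A (fun _ => True) w ≤ llen A P w := by
  obtain ⟨ω, hP, hlen, hw⟩ := exists_min_word h
  simpa [hlen] using llen_le (P := fun _ => True) (by simp) hw

lemma reach_mono {P : Fin l → Prop} {w : Function.End (Fin l → ℤ)}
    (h : Reach A P w) : Reach A (fun _ => True) w := by
  obtain ⟨ω, _, hw⟩ := h; exact ⟨ω, by simp, hw⟩

end Length

section Step

variable {k m : Fin l} {a b : ℤ}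

lemma sstep_k (hkk : A k k = 2) (hmk : A m k = b) (β : Fin l → ℤ) (x y : ℤ) :
    simpleRefl A k (β + x • ee k + y • ee m)
      = β + (-x - pr A β k - b * y) • ee k + y • ee m := by
  rw [sr_def, pr_add, pr_add, pr_smul, pr_smul, pr_ee, pr_ee, hkk, hmk]
  match_scalars <;> ring

lemma sstep_m (hmm : A m m = 2) (hkm : A k m = a) (β : Fin l → ℤ) (x y : ℤ) :
    simpleRefl A m (β + x • ee k + y • ee m)
      = β + x • ee k + (-y - pr A β m - a * x) • ee m := by
  rw [sr_def, pr_add, pr_add, pr_smul, pr_smul, pr_ee, pr_ee, hmm, hkm]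
  match_scalars <;> ring

lemma self_off (β : Fin l → ℤ) (k m : Fin l) :
    β = β + (0:ℤ) • ee k + (0:ℤ) • ee m := by simp

lemma braid0 (hkk : A k k = 2) (hmm : A m m = 2) (ha : A k m = 0) (hb : A m k = 0) :
    simpleRefl A k * simpleRefl A m = simpleRefl A m * simpleRefl A k := by
  funext β
  simp only [mul_app]
  rw [self_off β k m]
  simp only [sstep_k (A := A) hkk hb, sstep_m (A := A) hmm ha]
  match_scalars <;> ring

lemma braid1 (hkk : A k k = 2) (hmm : A m m = 2) (ha : A k m = -1) (hb : A m k = -1) :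
    simpleRefl A k * simpleRefl A m * simpleRefl A k
      = simpleRefl A m * simpleRefl A k * simpleRefl A m := by
  funext β
  simp only [mul_app]
  rw [self_off β k m]
  simp only [sstep_k (A := A) hkk hb, sstep_m (A := A) hmm ha]
  match_scalars <;> ring

lemma braid2 (hkk : A k k = 2) (hmm : A m m = 2) (ha : A k m = -1) (hb : A m k = -2) :
    simpleRefl A k * simpleRefl A m * simpleRefl A k * simpleRefl A m
      = simpleRefl A m * simpleRefl A k * simpleRefl A m * simpleRefl A k := by
  funext β
  simp only [mul_app]
  rw [self_off β k m]
  simp only [sstep_k (A := A) hkk hb, sstep_m (A := A) hmm ha]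
  match_scalars <;> ring

lemma braid3 (hkk : A k k = 2) (hmm : A m m = 2) (ha : A k m = -1) (hb : A m k = -3) :
    simpleRefl A k * simpleRefl A m * simpleRefl A k * simpleRefl A m *
        simpleRefl A k * simpleRefl A m
      = simpleRefl A m * simpleRefl A k * simpleRefl A m * simpleRefl A k *
        simpleRefl A m * simpleRefl A k := by
  funext β
  simp only [mul_app]
  rw [self_off β k m]
  simp only [sstep_k (A := A) hkk hb, sstep_m (A := A) hmm ha]
  match_scalars <;> ring

end Step


section RankTwo

variable (k m : Fin l) (a b : ℤ)

/-- one step of the rank-2 coordinate action (applying `s c` to `x•e k + y•e m`) -/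
def st (c : Fin l) (p : ℤ × ℤ) : ℤ × ℤ :=
  if c = k then (-p.1 - b * p.2, p.2) else (p.1, -p.2 - a * p.1)

/-- resulting coordinates after applying the letters of `ρ` in order (head first) -/
def h2 (ρ : List (Fin l)) (p : ℤ × ℤ) : ℤ × ℤ := ρ.foldl (fun q c => st k a b c q) p

@[simp] lemma h2_nil (p : ℤ × ℤ) : h2 k a b [] p = p := rfl

lemma h2_cons (c : Fin l) (ρ : List (Fin l)) (p : ℤ × ℤ) :
    h2 k a b (c :: ρ) p = h2 k a b ρ (st k a b c p) := rfl

lemma h2_append (ρ ρ' : List (Fin l)) (p : ℤ × ℤ) :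
    h2 k a b (ρ ++ ρ') p = h2 k a b ρ' (h2 k a b ρ p) := by
  simp [h2, List.foldl_append]

variable {k m a b}

lemma sr_span_k (hkk : A k k = 2) (hmk : A m k = b) (x y : ℤ) :
    simpleRefl A k (x • ee k + y • ee m) = (-x - b * y) • ee k + y • ee m := by
  rw [sr_def, pr_add, pr_smul, pr_smul, pr_ee, pr_ee, hkk, hmk]
  match_scalars <;> ring

lemma sr_span_m (hmm : A m m = 2) (hkm : A k m = a) (x y : ℤ) :
    simpleRefl A m (x • ee k + y • ee m) = x • ee k + (-y - a * x) • ee m := by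
  rw [sr_def, pr_add, pr_smul, pr_smul, pr_ee, pr_ee, hmm, hkm]
  match_scalars <;> ring

lemma wp_span (hkm : k ≠ m) (hkk : A k k = 2) (hmm : A m m = 2)
    (ha : A k m = a) (hb : A m k = b) (ω : List (Fin l)) (hω : ∀ c ∈ ω, c = k ∨ c = m)
    (x y : ℤ) :
    wp A ω (x • ee k + y • ee m)
      = (h2 k a b ω.reverse (x, y)).1 • ee k + (h2 k a b ω.reverse (x, y)).2 • ee m := by
  induction ω generalizing x y with
  | nil => rfl
  | cons c ω ih =>
      have hc := hω c List.mem_cons_self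
      have hω' : ∀ c' ∈ ω, c' = k ∨ c' = m := fun c' hc' => hω c' (List.mem_cons_of_mem c hc')
      have hrev : (c :: ω).reverse = ω.reverse ++ [c] := by simp
      rw [hrev, h2_append, wp_cons, mul_app, ih hω']
      set p := h2 k a b ω.reverse (x, y) with hp
      rcases hc with rfl | rfl
      · rw [sr_span_k (A := A) hkk hb]
        have : h2 c a b [c] p = (-p.1 - b * p.2, p.2) := by
          simp [h2, st]
        rw [this]
      · rw [sr_span_m (A := A) hmm ha]
        have : h2 k a b [c] p = (p.1, -p.2 - a * p.1) := by
          have : c ≠ k := fun h => hkm (h ▸ rfl)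
          simp [h2, st, this]
        rw [this]

/-- invariance of the quadratic form -/
lemma h2_q (ρ : List (Fin l)) (p : ℤ × ℤ) :
    a * (h2 k a b ρ p).1 ^ 2 + a * b * (h2 k a b ρ p).1 * (h2 k a b ρ p).2
        + b * (h2 k a b ρ p).2 ^ 2
      = a * p.1 ^ 2 + a * b * p.1 * p.2 + b * p.2 ^ 2 := by
  induction ρ generalizing p with
  | nil => simp
  | cons c ρ ih =>
      rw [h2_cons, ih]
      by_cases hc : c = k
      · simp only [st, if_pos hc]; ring
      · simp only [st, if_neg hc]; ring

/-- the rank-2 action is by matrices of determinant `±1` -/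
lemma h2_det (ρ : List (Fin l)) :
    ∃ p q r s : ℤ, (∀ x y : ℤ, h2 k a b ρ (x, y) = (p * x + q * y, r * x + s * y))
      ∧ (p * s - q * r = 1 ∨ p * s - q * r = -1) := by
  induction ρ with
  | nil => exact ⟨1, 0, 0, 1, fun x y => by simp, Or.inl (by ring)⟩
  | cons c ρ ih =>
      obtain ⟨p, q, r, s, hf, hdet⟩ := ih
      by_cases hc : c = k
      · refine ⟨-p, q - b * p, -r, s - b * r, fun x y => ?_, ?_⟩
        · rw [h2_cons]
          simp only [st, if_pos hc]
          rw [hf (-x - b * y) y]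
          simp only [Prod.mk.injEq]
          constructor <;> ring
        · rcases hdet with h | h
          · exact Or.inr (by linear_combination -h)
          · exact Or.inl (by linear_combination -h)
      · refine ⟨p - a * q, -q, r - a * s, -s, fun x y => ?_, ?_⟩
        · rw [h2_cons]
          simp only [st, if_neg hc]
          rw [hf x (-y - a * x)]
          simp only [Prod.mk.injEq]
          constructor <;> ring
        · rcases hdet with h | h
          · exact Or.inr (by linear_combination -h)
          · exact Or.inl (by linear_combination -h)

/-- mod `n` invariance when `a = b = -n` -/
lemma h2_mod {n : ℤ} (han : a = -n) (hbn : b = -n) (ρ : List (Fin l)) :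
    ∀ x y : ℤ, y ≡ 0 [ZMOD n] →
      (((h2 k a b ρ (x, y)).1 ≡ x [ZMOD n] ∨ (h2 k a b ρ (x, y)).1 ≡ -x [ZMOD n])
        ∧ (h2 k a b ρ (x, y)).2 ≡ 0 [ZMOD n]) := by
  induction ρ with
  | nil => exact fun x y hy => ⟨Or.inl (Int.ModEq.refl x), hy⟩
  | cons c ρ ih =>
      intro x y hy
      rw [h2_cons]
      by_cases hc : c = k
      · simp only [st, if_pos hc]
        have hx' : -x - b * y ≡ -x [ZMOD n] := by
          have : -x - b * y - -x = -b * y := by ring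
          calc -x - b * y ≡ -x - b * 0 [ZMOD n] :=
                Int.ModEq.sub (Int.ModEq.refl _) (Int.ModEq.mul (Int.ModEq.refl b) hy)
            _ = -x := by ring
        obtain ⟨h1, h2'⟩ := ih (-x - b * y) y hy
        refine ⟨?_, h2'⟩
        rcases h1 with h | h
        · exact Or.inr (h.trans hx')
        · refine Or.inl (h.trans ?_)
          calc -(-x - b * y) ≡ -(-x) [ZMOD n] := Int.ModEq.neg hx'
            _ = x := by ring
      · simp only [st, if_neg hc]
        have hy' : -y - a * x ≡ 0 [ZMOD n] := by
          have han' : a ≡ 0 [ZMOD n] := by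
            exact (Int.modEq_zero_iff_dvd).mpr ⟨-1, by rw [han]; ring⟩
          calc -y - a * x ≡ -0 - 0 * x [ZMOD n] :=
                Int.ModEq.sub (Int.ModEq.neg hy) (Int.ModEq.mul han' (Int.ModEq.refl x))
            _ = 0 := by ring
        exact ih x (-y - a * x) hy'

/-- alternating words: `Alt k m c ρ` means `ρ` is alternating in `k,m` starting with `c`. -/
inductive Alt (k m : Fin l) : Fin l → List (Fin l) → Prop
  | nil (c : Fin l) : Alt k m c []
  | consk (ρ : List (Fin l)) : Alt k m m ρ → Alt k m k (k :: ρ)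
  | consm (ρ : List (Fin l)) : Alt k m k ρ → Alt k m m (m :: ρ)

lemma alt_of_chain (hkm : k ≠ m) :
    ∀ (ρ : List (Fin l)) (c : Fin l), (∀ x ∈ c :: ρ, x = k ∨ x = m) →
      List.Chain' (· ≠ ·) (c :: ρ) → Alt k m c (c :: ρ) := by
  intro ρ
  induction ρ with
  | nil =>
      intro c hc _
      rcases hc c (by simp) with rfl | rfl
      · exact Alt.consk [] (Alt.nil m)
      · exact Alt.consm [] (Alt.nil k)
  | cons c' ρ' ih =>
      intro c hc hch
      have hne : c ≠ c' := (List.isChain_cons_cons.mp hch).1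
      have hch' : List.Chain' (· ≠ ·) (c' :: ρ') := (List.isChain_cons_cons.mp hch).2
      have hc' : ∀ x ∈ c' :: ρ', x = k ∨ x = m := fun x hx => hc x (List.mem_cons_of_mem c hx)
      have halt : Alt k m c' (c' :: ρ') := ih c' hc' hch'
      rcases hc c (by simp) with rfl | rfl
      · rcases hc' c' (by simp) with rfl | rfl
        · exact absurd rfl hne
        · exact Alt.consk _ halt
      · rcases hc' c' (by simp) with rfl | rfl
        · exact Alt.consm _ halt
        · exact absurd rfl hne

/-- positivity for the infinite dihedral case `a*b ≥ 4` -/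
lemma walk4 (hkm : k ≠ m) (hab : 4 ≤ a * b) (ha : a ≤ 0) (hb : b ≤ 0) :
    ∀ {c : Fin l} {ρ : List (Fin l)}, Alt k m c ρ → ∀ x y : ℤ, 0 ≤ x → 0 ≤ y →
      (c = k → 2 * x ≤ -b * y) → (c = m → 2 * y ≤ -a * x) →
      0 ≤ (h2 k a b ρ (x, y)).1 ∧ 0 ≤ (h2 k a b ρ (x, y)).2 := by
  intro c ρ halt
  induction halt with
  | nil c => intro x y hx hy _ _; exact ⟨hx, hy⟩
  | consk ρ htail ih =>
      intro x y hx hy hck _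
      have hk := hck rfl
      rw [h2_cons]
      have hst : st k a b k (x, y) = (-x - b * y, y) := by simp [st]
      rw [hst]
      have hx' : 0 ≤ -x - b * y := by nlinarith
      refine ih (-x - b * y) y hx' hy (fun h => absurd h.symm hkm) (fun _ => ?_)
      nlinarith [mul_le_mul_of_nonneg_left hk (neg_nonneg.mpr ha),
        mul_nonneg hy (by linarith : (0:ℤ) ≤ a * b - 4)]
  | consm ρ htail ih =>
      intro x y hx hy _ hcm
      have hm := hcm rfl
      rw [h2_cons]
      have hst : st k a b m (x, y) = (x, -y - a * x) := by
        simp [st, hkm.symm]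
      rw [hst]
      have hy' : 0 ≤ -y - a * x := by nlinarith
      refine ih x (-y - a * x) hx hy' (fun _ => ?_) (fun h => absurd h hkm)
      nlinarith [mul_le_mul_of_nonneg_left hm (neg_nonneg.mpr hb),
        mul_nonneg hx (by linarith : (0:ℤ) ≤ a * b - 4)]

end RankTwo


section WordTools

variable {k m : Fin l} {a b : ℤ}

lemma one_app (x : Fin l → ℤ) : (1 : Function.End (Fin l → ℤ)) x = x := rfl

lemma st_k (p : ℤ × ℤ) : st k a b k p = (-p.1 - b * p.2, p.2) := by simp [st]

lemma st_m (hkm : k ≠ m) (p : ℤ × ℤ) : st k a b m p = (p.1, -p.2 - a * p.1) := by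
  rw [st, if_neg (Ne.symm hkm)]

lemma sq_one (hdiag : ∀ i, A i i = 2) (c : Fin l) :
    simpleRefl A c * simpleRefl A c = 1 :=
  funext (sr_sr A c (hdiag c))

lemma wp_delete (hdiag : ∀ i, A i i = 2) (χ ρ : List (Fin l)) (c : Fin l) :
    wp A (χ ++ c :: c :: ρ) = wp A (χ ++ ρ) := by
  rw [wp_append, wp_append, wp_cons, wp_cons, ← mul_assoc (simpleRefl A c),
    sq_one hdiag, one_mul]

lemma chain_or_split :
    ∀ ω : List (Fin l), List.Chain' (· ≠ ·) ω ∨ ∃ χ c ρ, ω = χ ++ c :: c :: ρ := by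
  intro ω
  induction ω with
  | nil => exact Or.inl List.isChain_nil
  | cons x t ih =>
      cases t with
      | nil => exact Or.inl (List.isChain_singleton x)
      | cons y t' =>
          by_cases hxy : x = y
          · exact Or.inr ⟨[], x, t', by rw [hxy]; rfl⟩
          · rcases ih with hch | ⟨χ, c, ρ, hsplit⟩
            · exact Or.inl (List.isChain_cons_cons.mpr ⟨hxy, hch⟩)
            · exact Or.inr ⟨x :: χ, c, ρ, by rw [List.cons_append, ← hsplit]⟩

variable (hdiag : ∀ i, A i i = 2)

lemma t0red (hkm : k ≠ m) (hkk : A k k = 2) (hmm : A m m = 2)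
    (ha : A k m = 0) (hb : A m k = 0) :
    wp A [k, m, k] = wp A [m] := by
  funext β
  simp only [wp_cons, wp_nil, mul_app, one_app]
  rw [self_off β k m]
  simp only [sstep_k (A := A) hkk hb, sstep_m (A := A) hmm ha]
  match_scalars <;> ring

lemma t1red (hkm : k ≠ m) (hkk : A k k = 2) (hmm : A m m = 2)
    (ha : A k m = -1) (hb : A m k = -1) :
    wp A [m, k, m, k] = wp A [k, m] := by
  funext β
  simp only [wp_cons, wp_nil, mul_app, one_app]
  rw [self_off β k m]
  simp only [sstep_k (A := A) hkk hb, sstep_m (A := A) hmm ha]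
  match_scalars <;> ring

lemma t2red (hkm : k ≠ m) (hkk : A k k = 2) (hmm : A m m = 2)
    (ha : A k m = -1) (hb : A m k = -2) :
    wp A [k, m, k, m, k] = wp A [m, k, m] := by
  funext β
  simp only [wp_cons, wp_nil, mul_app, one_app]
  rw [self_off β k m]
  simp only [sstep_k (A := A) hkk hb, sstep_m (A := A) hmm ha]
  match_scalars <;> ring

lemma t2red' (hkm : k ≠ m) (hkk : A k k = 2) (hmm : A m m = 2)
    (ha : A k m = -2) (hb : A m k = -1) :
    wp A [k, m, k, m, k] = wp A [m, k, m] := by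
  funext β
  simp only [wp_cons, wp_nil, mul_app, one_app]
  rw [self_off β k m]
  simp only [sstep_k (A := A) hkk hb, sstep_m (A := A) hmm ha]
  match_scalars <;> ring

lemma t3red (hkm : k ≠ m) (hkk : A k k = 2) (hmm : A m m = 2)
    (ha : A k m = -1) (hb : A m k = -3) :
    wp A [k, m, k, m, k, m, k] = wp A [m, k, m, k, m] := by
  funext β
  simp only [wp_cons, wp_nil, mul_app, one_app]
  rw [self_off β k m]
  simp only [sstep_k (A := A) hkk hb, sstep_m (A := A) hmm ha]
  match_scalars <;> ring

lemma t3red' (hkm : k ≠ m) (hkk : A k k = 2) (hmm : A m m = 2)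
    (ha : A k m = -3) (hb : A m k = -1) :
    wp A [k, m, k, m, k, m, k] = wp A [m, k, m, k, m] := by
  funext β
  simp only [wp_cons, wp_nil, mul_app, one_app]
  rw [self_off β k m]
  simp only [sstep_k (A := A) hkk hb, sstep_m (A := A) hmm ha]
  match_scalars <;> ring

/-- helper: a witness bound on the length of `d * s k`. -/
lemma llen_mul_sk_le {P : Fin l → Prop} {d : Function.End (Fin l → ℤ)}
    (σ τ τ' : List (Fin l)) (hw : wp A (σ ++ τ) = d)
    (hred : wp A (τ ++ [k]) = wp A τ')
    (hlet : ∀ c ∈ σ ++ τ', P c) :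
    llen A P (d * simpleRefl A k) ≤ σ.length + τ'.length := by
  have h1 : wp A (σ ++ τ') = d * simpleRefl A k := by
    rw [wp_append, ← hred, wp_append, ← mul_assoc, ← wp_append, hw, wp_singleton]
  simpa using llen_le hlet h1

end WordTools


section R23

variable {k m : Fin l}

/-- letters restricted to `{k, m}` -/
abbrev inKM (k m c : Fin l) : Prop := c = k ∨ c = m

/-- If an element of the rank-2 subgroup maps `αₖ` to a positive multiple of `αₘ`,
then `{k,m}` is a single bond and the multiple is `1`. -/
lemma R3 (hdiag : ∀ i, A i i = 2) (hoff : ∀ i j, i ≠ j → A i j ≤ 0) (hkm : k ≠ m)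
    {d : Function.End (Fin l → ℤ)} (hd : Reach A (inKM k m) d)
    {c : ℤ} (hc : 0 < c) (heq : d (ee k) = c • ee m) :
    A k m = -1 ∧ A m k = -1 ∧ c = 1 := by
  obtain ⟨ω, hlet, hw⟩ := hd
  have hsem := wp_span (A := A) hkm (hdiag k) (hdiag m) rfl rfl ω hlet 1 0
  have hdk : d (ee k) = (h2 k (A k m) (A m k) ω.reverse (1, 0)).1 • ee k
      + (h2 k (A k m) (A m k) ω.reverse (1, 0)).2 • ee m := by
    rw [← hw]
    have h0 : (ee k : Fin l → ℤ) = (1:ℤ) • ee k + (0:ℤ) • ee m := by simp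
    conv_lhs => rw [h0]
    rw [hsem]
  set X := (h2 k (A k m) (A m k) ω.reverse (1, 0)).1 with hXdef
  set Y := (h2 k (A k m) (A m k) ω.reverse (1, 0)).2 with hYdef
  rw [hdk] at heq
  have hXv : X = 0 := by
    have h := congrFun heq k
    simpa [Pi.single_apply, hkm, Ne.symm hkm] using h
  have hYv : Y = c := by
    have h := congrFun heq m
    simpa [Pi.single_apply, hkm, Ne.symm hkm] using h
  -- determinant: c = 1
  obtain ⟨p, q, r', s, hf, hdet⟩ := h2_det (k := k) (a := A k m) (b := A m k) ω.reverse
  have h10 := hf 1 0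
  have hpX : p = X := by rw [hXdef, h10]; ring
  have hrY : r' = Y := by rw [hYdef, h10]; ring
  have hcdvd : c ∣ 1 := by
    rcases hdet with h | h
    · refine ⟨-q, ?_⟩
      rw [← hYv, ← hrY]; rw [hpX, hXv] at h; linear_combination -h
    · refine ⟨q, ?_⟩
      rw [← hYv, ← hrY]; rw [hpX, hXv] at h; linear_combination h
  have hc1 : c = 1 := by
    rcases Int.isUnit_iff.mp (isUnit_of_dvd_one hcdvd) with h | h
    · exact h
    · omega
  -- quadratic form: A m k = A k m
  have hba : A m k = A k m := by
    have hq := h2_q (k := k) (a := A k m) (b := A m k) ω.reverse (1, 0)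
    rw [← hXdef, ← hYdef, hXv, hYv, hc1] at hq
    norm_num at hq
    linarith
  -- mod n : A k m = -1
  set n := -(A k m) with hn
  have hmod := h2_mod (k := k) (a := A k m) (b := A m k) (n := n)
    (by rw [hn]; ring) (by rw [hba, hn]; ring) ω.reverse 1 0 (Int.ModEq.refl 0)
  have hX1 : (0:ℤ) ≡ 1 [ZMOD n] ∨ (0:ℤ) ≡ -1 [ZMOD n] := by
    rcases hmod.1 with h | h
    · exact Or.inl (by rw [← hXdef, hXv] at h; exact h)
    · exact Or.inr (by rw [← hXdef, hXv] at h; simpa using h)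
  have hndvd : n ∣ 1 := by
    rcases hX1 with h | h
    · simpa using Int.modEq_iff_dvd.mp h
    · have h2 := Int.modEq_iff_dvd.mp h
      rw [show (-1:ℤ) - 0 = -1 by ring] at h2
      exact dvd_neg.mp h2
  have hn1 : A k m = -1 := by
    have := Int.isUnit_iff.mp (isUnit_of_dvd_one hndvd)
    have hle := hoff k m hkm
    omega
  exact ⟨hn1, by rw [hba, hn1], hc1⟩

end R23


section R2sec

variable {k m : Fin l}

set_option maxHeartbeats 1000000 in
/-- Rank-2 positivity: if `d` lies in the rank-2 subgroup and `d * s k` is longer than `d`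
(with respect to `{k,m}`-words), then `d αₖ` is a nonnegative combination of `αₖ, αₘ`. -/
lemma R2 (hdiag : ∀ i, A i i = 2) (hoff : ∀ i j, i ≠ j → A i j ≤ 0)
    (hzero : ∀ i j, A i j = 0 ↔ A j i = 0) (hkm : k ≠ m)
    {d : Function.End (Fin l → ℤ)} (hd : Reach A (inKM k m) d)
    (hasc : llen A (inKM k m) d < llen A (inKM k m) (d * simpleRefl A k)) :
    ∃ c1 c2 : ℤ, 0 ≤ c1 ∧ 0 ≤ c2 ∧ d (ee k) = c1 • ee k + c2 • ee m := by
  obtain ⟨ω, hlet, hlen, hw⟩ := exists_min_word hd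
  by_cases hnil : ω = []
  · refine ⟨1, 0, by norm_num, by norm_num, ?_⟩
    rw [← hw, hnil]
    show ee k = (1:ℤ) • ee k + (0:ℤ) • ee m
    simp
  -- the minimal word has no adjacent repetitions
  have hchain : List.Chain' (· ≠ ·) ω := by
    rcases chain_or_split ω with h | ⟨χ, c, ρ, hsplit⟩
    · exact h
    · exfalso
      have hwd : wp A (χ ++ ρ) = d := by rw [← wp_delete hdiag χ ρ c, ← hsplit, hw]
      have hlet' : ∀ x ∈ χ ++ ρ, inKM k m x := by
        intro x hx
        apply hlet
        rw [hsplit]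
        rcases List.mem_append.mp hx with h | h
        · exact List.mem_append_left _ h
        · exact List.mem_append_right _ (by simp [h])
      have hle := llen_le hlet' hwd
      simp only [List.length_append] at hle
      have hln : ω.length = χ.length + ρ.length + 2 := by rw [hsplit]; simp; omega
      omega
  -- the last letter is m
  have hgl : ω.getLast hnil = m := by
    rcases hlet _ (List.getLast_mem hnil) with hk | hm
    · exfalso
      have hcat : ω.dropLast ++ [k] = ω := by
        rw [← hk]; exact List.dropLast_append_getLast hnil
      have h1 : wp A (ω ++ [k]) = d * simpleRefl A k := by
        rw [wp_append, hw, wp_singleton]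
      have h2 : ω ++ [k] = ω.dropLast ++ (k :: k :: []) := by
        conv_lhs => rw [← hcat]
        rw [List.append_assoc]
        rfl
      have h3 : wp A (ω.dropLast ++ ([] : List (Fin l))) = d * simpleRefl A k := by
        rw [← wp_delete hdiag _ [] k, ← h2, h1]
      have h4 := llen_le (P := inKM k m)
        (fun c hc => hlet c (List.dropLast_subset ω (by simpa using hc))) h3
      simp only [List.append_nil] at h4
      have h5 : ω.dropLast.length = ω.length - 1 := by simp
      have h6 : 0 < ω.length := List.length_pos_iff.mpr hnil
      omega
    · exact hm
  have hrev : ω.reverse = m :: ω.dropLast.reverse := by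
    conv_lhs => rw [← List.dropLast_append_getLast hnil]
    simp [hgl]
  have hchainrev : List.Chain' (· ≠ ·) ω.reverse := by
    show List.IsChain _ ω.reverse
    rw [List.isChain_reverse]
    have hflip : (flip (· ≠ ·) : Fin l → Fin l → Prop) = (· ≠ ·) := by
      funext x y
      exact propext ⟨Ne.symm, Ne.symm⟩
    show List.IsChain (flip (· ≠ ·)) ω
    rw [hflip]
    exact hchain
  have hAlt : Alt k m m ω.reverse := by
    rw [hrev]
    refine alt_of_chain hkm _ m ?_ (hrev ▸ hchainrev)
    intro x hx
    rcases List.mem_cons.mp hx with rfl | hx'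
    · exact Or.inr rfl
    · exact hlet x (List.dropLast_subset ω (by simpa using hx'))
  -- semantics
  have hsem := wp_span (A := A) hkm (hdiag k) (hdiag m) rfl rfl ω hlet 1 0
  have hdk : d (ee k) = (h2 k (A k m) (A m k) ω.reverse (1, 0)).1 • ee k
      + (h2 k (A k m) (A m k) ω.reverse (1, 0)).2 • ee m := by
    rw [← hw]
    have h0 : (ee k : Fin l → ℤ) = (1:ℤ) • ee k + (0:ℤ) • ee m := by simp
    conv_lhs => rw [h0]
    rw [hsem]
  -- abstract the reversed word
  obtain ⟨ρ, hρ⟩ : ∃ ρ, ω.reverse = ρ := ⟨_, rfl⟩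
  rw [hρ] at hAlt hdk
  have hωρ : ω = ρ.reverse := by rw [← hρ, List.reverse_reverse]
  have hρlen : ρ.length = ω.length := by rw [← hρ]; simp
  clear hρ hrev hchainrev hsem hchain hgl
  -- case analysis on the labels
  have hak : A k m ≤ 0 := hoff k m hkm
  have hbk : A m k ≤ 0 := hoff m k hkm.symm
  by_cases haz : A k m = 0
  · have hbz : A m k = 0 := (hzero k m).mp haz
    cases hAlt with
    | nil => exact absurd (by simpa using hωρ) hnil
    | consk ρ₁ h₁ => exact absurd rfl hkm
    | consm ρ₁ h₁ =>
      cases h₁ with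
      | nil =>
          refine ⟨_, _, ?_, ?_, hdk⟩ <;>
            norm_num [h2_cons, st_m hkm, st_k, haz, hbz]
      | consm ρ₂ h₂ => exact absurd rfl hkm
      | consk ρ₂ h₂ =>
          exfalso
          have hω2 : ω = ρ₂.reverse ++ [k, m] := by rw [hωρ]; simp
          have hw2 : wp A (ρ₂.reverse ++ [k, m]) = d := by rw [← hω2]; exact hw
          have hred := t0red (A := A) hkm (hdiag k) (hdiag m) haz hbz
          have hb := llen_mul_sk_le (A := A) (P := inKM k m) ρ₂.reverse [k, m] [m] hw2 hred ?_
          · simp only [List.length_reverse, List.length_cons, List.length_nil] at hb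
            have hlω : ω.length = ρ₂.length + 2 := by rw [hω2]; simp
            omega
          · intro x hx
            rcases List.mem_append.mp hx with h | h
            · exact hlet x (by rw [hω2]; exact List.mem_append_left _ h)
            · simp only [List.mem_singleton] at h
              exact Or.inr h
  · have hbz' : A m k ≠ 0 := fun h => haz ((hzero m k).mp h)
    have haneg : A k m ≤ -1 := by omega
    have hbneg : A m k ≤ -1 := by omega
    by_cases h4 : 4 ≤ A k m * A m k
    · have hwalk := walk4 (a := A k m) (b := A m k) hkm h4 hak hbk hAlt 1 0
        (by norm_num) (le_refl 0)
        (fun h => absurd h (Ne.symm hkm)) (fun _ => by linarith)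
      exact ⟨_, _, hwalk.1, hwalk.2, hdk⟩
    · push_neg at h4
      have hage : -3 ≤ A k m := by nlinarith
      have hbge : -3 ≤ A m k := by nlinarith
      have haC : A k m = -1 ∨ A k m = -2 ∨ A k m = -3 := by omega
      have hbC : A m k = -1 ∨ A m k = -2 ∨ A m k = -3 := by omega
      -- helper for the reduction contradictions
      have key : ∀ (σ τ τ' : List (Fin l)), ω = σ ++ τ →
          wp A (τ ++ [k]) = wp A τ' → (∀ x ∈ τ', inKM k m x) →
          σ.length + τ'.length < ω.length → False := by
        intro σ τ τ' hωeq hred hτ' hlt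
        have hwd : wp A (σ ++ τ) = d := by rw [← hωeq]; exact hw
        have hb := llen_mul_sk_le (A := A) (P := inKM k m) σ τ τ' hwd hred ?_
        · omega
        · intro x hx
          rcases List.mem_append.mp hx with h | h
          · exact hlet x (by rw [hωeq]; exact List.mem_append_left _ h)
          · exact hτ' x h
      rcases haC with hA | hA | hA <;> rcases hbC with hB | hB | hB
      all_goals first
        | (exfalso; rw [hA, hB] at h4; norm_num at h4; done)
        | skip
      -- (-1, -1)
      · cases hAlt with
        | nil => exact absurd (by simpa using hωρ) hnil
        | consk ρ₁ h₁ => exact absurd rfl hkm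
        | consm ρ₁ h₁ =>
          cases h₁ with
          | nil => refine ⟨_, _, ?_, ?_, hdk⟩ <;>
              norm_num [h2_cons, st_m hkm, st_k, hA, hB]
          | consm ρ₂ h₂ => exact absurd rfl hkm
          | consk ρ₂ h₂ =>
            cases h₂ with
            | nil => refine ⟨_, _, ?_, ?_, hdk⟩ <;>
                norm_num [h2_cons, st_m hkm, st_k, hA, hB]
            | consk ρ₃ h₃ => exact absurd rfl hkm
            | consm ρ₃ h₃ =>
              exfalso
              exact key ρ₃.reverse [m, k, m] [k, m] (by rw [hωρ]; simp)
                (t1red (A := A) hkm (hdiag k) (hdiag m) hA hB)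
                (by intro x hx; simp only [List.mem_cons, List.mem_singleton] at hx; tauto)
                (by rw [hωρ]; simp; try omega)
      -- (-1, -2)
      · cases hAlt with
        | nil => exact absurd (by simpa using hωρ) hnil
        | consk ρ₁ h₁ => exact absurd rfl hkm
        | consm ρ₁ h₁ =>
          cases h₁ with
          | nil => refine ⟨_, _, ?_, ?_, hdk⟩ <;>
              norm_num [h2_cons, st_m hkm, st_k, hA, hB]
          | consm ρ₂ h₂ => exact absurd rfl hkm
          | consk ρ₂ h₂ =>
            cases h₂ with
            | nil => refine ⟨_, _, ?_, ?_, hdk⟩ <;>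
                norm_num [h2_cons, st_m hkm, st_k, hA, hB]
            | consk ρ₃ h₃ => exact absurd rfl hkm
            | consm ρ₃ h₃ =>
              cases h₃ with
              | nil => refine ⟨_, _, ?_, ?_, hdk⟩ <;>
                  norm_num [h2_cons, st_m hkm, st_k, hA, hB]
              | consm ρ₄ h₄ => exact absurd rfl hkm
              | consk ρ₄ h₄ =>
                exfalso
                exact key ρ₄.reverse [k, m, k, m] [m, k, m] (by rw [hωρ]; simp)
                  (t2red (A := A) hkm (hdiag k) (hdiag m) hA hB)
                  (by intro x hx; simp only [List.mem_cons, List.mem_singleton] at hx; tauto)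
                  (by rw [hωρ]; simp; try omega)
      -- (-1, -3)
      · cases hAlt with
        | nil => exact absurd (by simpa using hωρ) hnil
        | consk ρ₁ h₁ => exact absurd rfl hkm
        | consm ρ₁ h₁ =>
          cases h₁ with
          | nil => refine ⟨_, _, ?_, ?_, hdk⟩ <;>
              norm_num [h2_cons, st_m hkm, st_k, hA, hB]
          | consm ρ₂ h₂ => exact absurd rfl hkm
          | consk ρ₂ h₂ =>
            cases h₂ with
            | nil => refine ⟨_, _, ?_, ?_, hdk⟩ <;>
                norm_num [h2_cons, st_m hkm, st_k, hA, hB]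
            | consk ρ₃ h₃ => exact absurd rfl hkm
            | consm ρ₃ h₃ =>
              cases h₃ with
              | nil => refine ⟨_, _, ?_, ?_, hdk⟩ <;>
                  norm_num [h2_cons, st_m hkm, st_k, hA, hB]
              | consm ρ₄ h₄ => exact absurd rfl hkm
              | consk ρ₄ h₄ =>
                cases h₄ with
                | nil => refine ⟨_, _, ?_, ?_, hdk⟩ <;>
                    norm_num [h2_cons, st_m hkm, st_k, hA, hB]
                | consk ρ₅ h₅ => exact absurd rfl hkm
                | consm ρ₅ h₅ =>
                  cases h₅ with
                  | nil => refine ⟨_, _, ?_, ?_, hdk⟩ <;>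
                      norm_num [h2_cons, st_m hkm, st_k, hA, hB]
                  | consm ρ₆ h₆ => exact absurd rfl hkm
                  | consk ρ₆ h₆ =>
                    exfalso
                    exact key ρ₆.reverse [k, m, k, m, k, m] [m, k, m, k, m]
                      (by rw [hωρ]; simp)
                      (t3red (A := A) hkm (hdiag k) (hdiag m) hA hB)
                      (by intro x hx; simp only [List.mem_cons, List.mem_singleton] at hx; tauto)
                      (by rw [hωρ]; simp; try omega)
      -- (-2, -1)
      · cases hAlt with
        | nil => exact absurd (by simpa using hωρ) hnil
        | consk ρ₁ h₁ => exact absurd rfl hkm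
        | consm ρ₁ h₁ =>
          cases h₁ with
          | nil => refine ⟨_, _, ?_, ?_, hdk⟩ <;>
              norm_num [h2_cons, st_m hkm, st_k, hA, hB]
          | consm ρ₂ h₂ => exact absurd rfl hkm
          | consk ρ₂ h₂ =>
            cases h₂ with
            | nil => refine ⟨_, _, ?_, ?_, hdk⟩ <;>
                norm_num [h2_cons, st_m hkm, st_k, hA, hB]
            | consk ρ₃ h₃ => exact absurd rfl hkm
            | consm ρ₃ h₃ =>
              cases h₃ with
              | nil => refine ⟨_, _, ?_, ?_, hdk⟩ <;>
                  norm_num [h2_cons, st_m hkm, st_k, hA, hB]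
              | consm ρ₄ h₄ => exact absurd rfl hkm
              | consk ρ₄ h₄ =>
                exfalso
                exact key ρ₄.reverse [k, m, k, m] [m, k, m] (by rw [hωρ]; simp)
                  (t2red' (A := A) hkm (hdiag k) (hdiag m) hA hB)
                  (by intro x hx; simp only [List.mem_cons, List.mem_singleton] at hx; tauto)
                  (by rw [hωρ]; simp; try omega)
      -- (-3, -1)
      · cases hAlt with
        | nil => exact absurd (by simpa using hωρ) hnil
        | consk ρ₁ h₁ => exact absurd rfl hkm
        | consm ρ₁ h₁ =>
          cases h₁ with
          | nil => refine ⟨_, _, ?_, ?_, hdk⟩ <;>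
              norm_num [h2_cons, st_m hkm, st_k, hA, hB]
          | consm ρ₂ h₂ => exact absurd rfl hkm
          | consk ρ₂ h₂ =>
            cases h₂ with
            | nil => refine ⟨_, _, ?_, ?_, hdk⟩ <;>
                norm_num [h2_cons, st_m hkm, st_k, hA, hB]
            | consk ρ₃ h₃ => exact absurd rfl hkm
            | consm ρ₃ h₃ =>
              cases h₃ with
              | nil => refine ⟨_, _, ?_, ?_, hdk⟩ <;>
                  norm_num [h2_cons, st_m hkm, st_k, hA, hB]
              | consm ρ₄ h₄ => exact absurd rfl hkm
              | consk ρ₄ h₄ =>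
                cases h₄ with
                | nil => refine ⟨_, _, ?_, ?_, hdk⟩ <;>
                    norm_num [h2_cons, st_m hkm, st_k, hA, hB]
                | consk ρ₅ h₅ => exact absurd rfl hkm
                | consm ρ₅ h₅ =>
                  cases h₅ with
                  | nil => refine ⟨_, _, ?_, ?_, hdk⟩ <;>
                      norm_num [h2_cons, st_m hkm, st_k, hA, hB]
                  | consm ρ₆ h₆ => exact absurd rfl hkm
                  | consk ρ₆ h₆ =>
                    exfalso
                    exact key ρ₆.reverse [k, m, k, m, k, m] [m, k, m, k, m]
                      (by rw [hωρ]; simp)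
                      (t3red' (A := A) hkm (hdiag k) (hdiag m) hA hB)
                      (by intro x hx; simp only [List.mem_cons, List.mem_singleton] at hx; tauto)
                      (by rw [hωρ]; simp; try omega)

end R2sec


section Decomp

variable {k m : Fin l}

lemma reach_mul_simple {P : Fin l → Prop} {w : Function.End (Fin l → ℤ)}
    (hw : Reach A P w) {c : Fin l} (hc : P c) : Reach A P (w * simpleRefl A c) := by
  obtain ⟨ω, hP, hωw⟩ := hw
  refine ⟨ω ++ [c], ?_, by rw [wp_append, hωw, wp_singleton]⟩
  intro x hx
  rcases List.mem_append.mp hx with h | h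
  · exact hP x h
  · simp only [List.mem_singleton] at h; exact h ▸ hc

lemma reach_simple_mul {P : Fin l → Prop} {w : Function.End (Fin l → ℤ)}
    (hw : Reach A P w) {c : Fin l} (hc : P c) : Reach A P (simpleRefl A c * w) := by
  obtain ⟨ω, hP, hωw⟩ := hw
  refine ⟨c :: ω, ?_, by rw [wp_cons, hωw]⟩
  intro x hx
  rcases List.mem_cons.mp hx with rfl | h
  · exact hc
  · exact hP x h

lemma llen_simple_le (P : Fin l → Prop) {c : Fin l} (hc : P c) :
    llen A P (simpleRefl A c) ≤ 1 :=
  llen_le (ω := [c]) (by simpa using hc) (wp_singleton A c)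

lemma mul_simple_simple (hdiag : ∀ i, A i i = 2) (w : Function.End (Fin l → ℤ))
    (c : Fin l) : w * simpleRefl A c * simpleRefl A c = w := by
  rw [mul_assoc, sq_one hdiag, mul_one]

lemma lt_ne_mul (hdiag : ∀ i, A i i = 2) {w : Function.End (Fin l → ℤ)}
    (hw : Reach A (fun _ => True) w) (c : Fin l) :
    llen A (fun _ => True) (w * simpleRefl A c) ≠ llen A (fun _ => True) w := by
  obtain ⟨ω, hP, hlenω, hωw⟩ := exists_min_word hw
  obtain ⟨ω', hP', hlenω', hωw'⟩ := exists_min_word (reach_mul_simple hw (c := c) trivial)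
  have hpar : Even (ω ++ [c]).length ↔ Even ω'.length := by
    apply wp_parity hdiag
    rw [wp_append, hωw, wp_singleton, hωw']
  simp only [List.length_append, List.length_singleton] at hpar
  intro heq
  rw [hlenω, hlenω', heq, Nat.even_add_one] at hpar
  tauto

lemma triangle_mul_simple (hdiag : ∀ i, A i i = 2) {w : Function.End (Fin l → ℤ)}
    (hw : Reach A (fun _ => True) w) (c : Fin l) :
    llen A (fun _ => True) w ≤ llen A (fun _ => True) (w * simpleRefl A c) + 1 := by
  have h1 : w = w * simpleRefl A c * simpleRefl A c := (mul_simple_simple hdiag w c).symm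
  calc llen A (fun _ => True) w
      = llen A (fun _ => True) (w * simpleRefl A c * simpleRefl A c) := by rw [← h1]
    _ ≤ llen A (fun _ => True) (w * simpleRefl A c) + llen A (fun _ => True) (simpleRefl A c) :=
        llen_mul_le (reach_mul_simple hw trivial) ⟨[c], by simp, wp_singleton A c⟩
    _ ≤ llen A (fun _ => True) (w * simpleRefl A c) + 1 := by
        have := llen_simple_le (A := A) (fun _ => True) (c := c) trivial
        omega

end Decomp


section DecompMain

variable {k m : Fin l}

lemma singleton_letters {P : Fin l → Prop} {c : Fin l} (hc : P c) : ∀ x ∈ [c], P x := by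
  intro x hx
  simp only [List.mem_singleton] at hx
  exact hx ▸ hc

lemma sr_ne_one (hdiag : ∀ i, A i i = 2) (c : Fin l) : simpleRefl A c ≠ 1 := by
  intro h
  have h1 := congrFun (congrFun h (ee c)) c
  rw [sr_def, pr_ee, hdiag c] at h1
  simp only [one_app, Pi.sub_apply, Pi.smul_apply, smul_eq_mul, Pi.single_eq_same] at h1
  omega

lemma decomp (hdiag : ∀ i, A i i = 2) (hkm : k ≠ m)
    {w : Function.End (Fin l → ℤ)} (hw : Reach A (fun _ => True) w)
    (hup : llen A (fun _ => True) w < llen A (fun _ => True) (w * simpleRefl A k))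
    (hdn : llen A (fun _ => True) (w * simpleRefl A m) < llen A (fun _ => True) w) :
    ∃ v dd : Function.End (Fin l → ℤ), Reach A (fun _ => True) v ∧ Reach A (inKM k m) dd ∧
      w = v * dd ∧
      llen A (fun _ => True) v < llen A (fun _ => True) w ∧
      llen A (fun _ => True) v < llen A (fun _ => True) (v * simpleRefl A k) ∧
      llen A (fun _ => True) v < llen A (fun _ => True) (v * simpleRefl A m) ∧
      llen A (inKM k m) dd < llen A (inKM k m) (dd * simpleRefl A k) := by
  classical
  set LT := llen A (fun _ => True) with hLT
  set LD := llen A (inKM k m) with hLD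
  set P : ℕ → Prop := fun nd => ∃ v dd : Function.End (Fin l → ℤ),
    Reach A (fun _ => True) v ∧ Reach A (inKM k m) dd ∧ w = v * dd ∧
    LT v + nd = LT w ∧ LD dd = nd with hP
  -- the base decomposition
  have hbase : P 1 := by
    refine ⟨w * simpleRefl A m, simpleRefl A m, reach_mul_simple hw trivial,
      ⟨[m], singleton_letters (Or.inr rfl), wp_singleton A m⟩,
      (mul_simple_simple hdiag w m).symm, ?_, ?_⟩
    · have h1 := triangle_mul_simple (A := A) hdiag hw m
      rw [← hLT] at h1
      omega
    · have hle : LD (simpleRefl A m) ≤ 1 := llen_simple_le (inKM k m) (Or.inr rfl)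
      have hne : LD (simpleRefl A m) ≠ 0 := by
        intro h0
        exact sr_ne_one hdiag m
          (eq_one_of_llen_eq_zero ⟨[m], singleton_letters (Or.inr rfl), wp_singleton A m⟩ h0)
      omega
  have hLTw1 : 1 ≤ LT w := by omega
  set N := Nat.findGreatest P (LT w) with hN
  have hPN : P N := Nat.findGreatest_spec hLTw1 hbase
  have hN1 : 1 ≤ N := Nat.le_findGreatest hLTw1 hbase
  obtain ⟨v, dd, hv, hdd, hwvd, hsum, hLDdd⟩ := hPN
  -- both letters increase the length of v
  have hvgrow : ∀ c : Fin l, inKM k m c → LT v < LT (v * simpleRefl A c) := by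
    intro c hc
    by_contra hle
    push_neg at hle
    have hlt : LT (v * simpleRefl A c) < LT v :=
      lt_of_le_of_ne hle (lt_ne_mul hdiag hv c)
    set v' := v * simpleRefl A c with hv'
    set dd' := simpleRefl A c * dd with hdd'
    have hv'r : Reach A (fun _ => True) v' := reach_mul_simple hv trivial
    have hdd'r : Reach A (inKM k m) dd' := reach_simple_mul hdd hc
    have hwvd' : w = v' * dd' := by
      rw [hv', hdd', mul_assoc, ← mul_assoc (simpleRefl A c), sq_one hdiag, one_mul, hwvd]
    have hDb1 : LD dd' ≤ 1 + LD dd := by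
      have := llen_mul_le (u := simpleRefl A c) (v := dd)
        ⟨[c], singleton_letters hc, wp_singleton A c⟩ hdd
      have h2 := llen_simple_le (A := A) (inKM k m) hc
      rw [← hLD] at this h2
      rw [← hdd'] at this
      omega
    have hwle : LT w ≤ LT v' + LD dd' := by
      have h1 : LT w ≤ LT v' + LT dd' := by
        rw [hwvd']
        exact llen_mul_le hv'r (reach_mono hdd'r)
      have h2 : LT dd' ≤ LD dd' := llen_true_le hdd'r
      omega
    by_cases hnd : LD dd' ≤ N
    · omega
    · have hnd1 : LD dd' = N + 1 := by omega
      have hPsucc : P (N + 1) := by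
        refine ⟨v', dd', hv'r, hdd'r, hwvd', ?_, hnd1⟩
        omega
      have hgr := Nat.findGreatest_is_greatest (lt_add_one N) (by omega : N + 1 ≤ LT w)
      exact hgr hPsucc
  have hvk := hvgrow k (Or.inl rfl)
  have hvm := hvgrow m (Or.inr rfl)
  -- `dd` is nontrivial, so `v` is shorter
  have hvlt : LT v < LT w := by
    rcases Nat.eq_zero_or_pos N with h0 | hpos
    · exfalso
      have : dd = 1 := eq_one_of_llen_eq_zero hdd (by rw [← hLD, hLDdd, h0])
      rw [this, mul_one] at hwvd
      rw [← hwvd] at hvm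
      omega
    · omega
  -- the rank-2 part still increases with `s k`
  have hdk : LD dd < LD (dd * simpleRefl A k) := by
    by_contra hle
    push_neg at hle
    have h1 : w * simpleRefl A k = v * (dd * simpleRefl A k) := by
      rw [hwvd, mul_assoc]
    have h2 : LT (w * simpleRefl A k) ≤ LT v + LD (dd * simpleRefl A k) := by
      have h3 : LT (w * simpleRefl A k) ≤ LT v + LT (dd * simpleRefl A k) := by
        rw [h1]
        exact llen_mul_le hv (reach_mono (reach_mul_simple hdd (Or.inl rfl)))
      have h4 : LT (dd * simpleRefl A k) ≤ LD (dd * simpleRefl A k) :=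
        llen_true_le (reach_mul_simple hdd (Or.inl rfl))
      omega
    omega
  exact ⟨v, dd, hv, hdd, hwvd, hvlt, hvk, hvm, hdk⟩

end DecompMain


section MainProof

lemma ee_same (p : Fin l) : ee p p = 1 := Pi.single_eq_same p 1

lemma ee_ne {p q : Fin l} (h : q ≠ p) : ee p q = 0 := Pi.single_eq_of_ne h 1

lemma ee_nonneg (p q : Fin l) : 0 ≤ ee p q := by
  rcases eq_or_ne q p with rfl | h
  · simp
  · simp [Pi.single_eq_of_ne h]

lemma wp_zero (ω : List (Fin l)) : wp A ω 0 = 0 := by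
  have h := wp_smul A ω 0 0
  simpa using h

lemma last_letter_descends (hdiag : ∀ i, A i i = 2) {w : Function.End (Fin l → ℤ)}
    (hw : Reach A (fun _ => True) w) (hpos : 0 < llen A (fun _ => True) w) :
    ∃ mL : Fin l, llen A (fun _ => True) (w * simpleRefl A mL) < llen A (fun _ => True) w := by
  obtain ⟨ω, _, hlenω, hωw⟩ := exists_min_word hw
  have hnil : ω ≠ [] := by
    intro h
    rw [h] at hlenω
    simp at hlenω
    omega
  refine ⟨ω.getLast hnil, ?_⟩
  have hcat : ω.dropLast ++ [ω.getLast hnil] = ω := List.dropLast_append_getLast hnil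
  have h1 : wp A ω.dropLast = w * simpleRefl A (ω.getLast hnil) := by
    have h2 : wp A (ω ++ [ω.getLast hnil]) = w * simpleRefl A (ω.getLast hnil) := by
      rw [wp_append, hωw, wp_singleton]
    have h3 : ω ++ [ω.getLast hnil]
        = ω.dropLast ++ (ω.getLast hnil :: ω.getLast hnil :: []) := by
      have h5 : ω.dropLast ++ (ω.getLast hnil :: ω.getLast hnil :: [])
          = (ω.dropLast ++ [ω.getLast hnil]) ++ [ω.getLast hnil] := by simp
      rw [h5, hcat]
    rw [← h2, h3, wp_delete hdiag, List.append_nil]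
  have h4 := llen_le (P := fun _ => True) (fun c _ => trivial) h1
  have h5 : ω.dropLast.length = ω.length - 1 := by simp
  have h6 : 0 < ω.length := List.length_pos_iff.mpr hnil
  omega

lemma posRoot (hdiag : ∀ i, A i i = 2) (hoff : ∀ i j, i ≠ j → A i j ≤ 0)
    (hzero : ∀ i j, A i j = 0 ↔ A j i = 0) :
    ∀ n : ℕ, ∀ w : Function.End (Fin l → ℤ), Reach A (fun _ => True) w →
      llen A (fun _ => True) w = n →
      ∀ k, llen A (fun _ => True) w < llen A (fun _ => True) (w * simpleRefl A k) →
      ∀ q, 0 ≤ w (ee k) q := by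
  intro n
  induction n using Nat.strong_induction_on with
  | _ n ih =>
    intro w hw hn k hk q
    rcases Nat.eq_zero_or_pos n with h0 | hpos
    · have hw1 : w = 1 := eq_one_of_llen_eq_zero hw (by omega)
      rw [hw1, one_app]
      exact ee_nonneg k q
    · obtain ⟨mL, hdn⟩ := last_letter_descends hdiag hw (by omega)
      have hkm : k ≠ mL := by
        intro h
        rw [← h] at hdn
        omega
      obtain ⟨v, dd, hv, hdd, hwvd, hvlt, hvk, hvm, hdk⟩ := decomp hdiag hkm hw hk hdn
      have hvknn := ih (llen A (fun _ => True) v) (by omega) v hv rfl k hvk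
      have hvmnn := ih (llen A (fun _ => True) v) (by omega) v hv rfl mL hvm
      obtain ⟨c1, c2, hc1, hc2, hde⟩ := R2 hdiag hoff hzero hkm hdd hdk
      obtain ⟨ωv, _, hωv⟩ := hv
      have hkey : w (ee k) = c1 • v (ee k) + c2 • v (ee mL) := by
        rw [hwvd, mul_app, hde, ← hωv, wp_add, wp_smul, wp_smul]
      rw [hkey]
      simp only [Pi.add_apply, Pi.smul_apply, smul_eq_mul]
      exact add_nonneg (mul_nonneg hc1 (hvknn q)) (mul_nonneg hc2 (hvmnn q))

lemma sr_ee_self (hdiag : ∀ i, A i i = 2) (c : Fin l) :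
    simpleRefl A c (ee c) = -ee c := by
  rw [sr_def, pr_ee, hdiag c]
  match_scalars <;> ring

lemma ascent_of_fix (hdiag : ∀ i, A i i = 2) (hoff : ∀ i j, i ≠ j → A i j ≤ 0)
    (hzero : ∀ i j, A i j = 0 ↔ A j i = 0) {w : Function.End (Fin l → ℤ)}
    (hw : Reach A (fun _ => True) w) {k j : Fin l} (hwk : w (ee k) = ee j) :
    llen A (fun _ => True) w < llen A (fun _ => True) (w * simpleRefl A k) := by
  rcases lt_trichotomy (llen A (fun _ => True) (w * simpleRefl A k))
    (llen A (fun _ => True) w) with hlt | heq | hgt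
  · exfalso
    have hw' : Reach A (fun _ => True) (w * simpleRefl A k) := reach_mul_simple hw trivial
    have hasc : llen A (fun _ => True) (w * simpleRefl A k)
        < llen A (fun _ => True) ((w * simpleRefl A k) * simpleRefl A k) := by
      rw [mul_simple_simple hdiag]
      exact hlt
    have hpos := posRoot hdiag hoff hzero _ (w * simpleRefl A k) hw' rfl k hasc j
    obtain ⟨ωw, _, hωw⟩ := hw
    have hcomp : (w * simpleRefl A k) (ee k) = -ee j := by
      rw [mul_app, sr_ee_self hdiag]
      have : (-ee k : Fin l → ℤ) = (-1 : ℤ) • ee k := by module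
      rw [this, ← hωw, wp_smul, hωw, hwk]
      module
    rw [hcomp] at hpos
    simp only [Pi.neg_apply] at hpos
    have := ee_nonneg j j
    simp only [ee_same] at hpos
    omega
  · exact absurd heq (lt_ne_mul hdiag hw k)
  · exact hgt

lemma edge_step (hdiag : ∀ i, A i i = 2) {p q : Fin l}
    (hpq : A p q = -1) (hqp : A q p = -1) :
    (simpleRefl A p * simpleRefl A q) (ee p) = ee q := by
  rw [mul_app, sr_def A q, pr_ee, hpq]
  rw [sr_def A p, pr_sub, pr_smul, pr_ee, pr_ee, hdiag p, hqp]
  match_scalars <;> ring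

set_option maxHeartbeats 800000 in
lemma mainForward (hdiag : ∀ i, A i i = 2) (hoff : ∀ i j, i ≠ j → A i j ≤ 0)
    (hzero : ∀ i j, A i j = 0 ↔ A j i = 0) :
    ∀ n : ℕ, ∀ w : Function.End (Fin l → ℤ), Reach A (fun _ => True) w →
      llen A (fun _ => True) w = n → ∀ i j : Fin l, w (ee i) = ee j →
      Relation.ReflTransGen (fun p q : Fin l => A p q = -1 ∧ A q p = -1) i j := by
  intro n
  induction n using Nat.strong_induction_on with
  | _ n ih =>
    intro w hw hn i j hij
    rcases Nat.eq_zero_or_pos n with h0 | hpos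
    · have hw1 : w = 1 := eq_one_of_llen_eq_zero hw (by omega)
      rw [hw1, one_app] at hij
      have hijeq : i = j := by
        by_contra hne
        have hcf := congrFun hij i
        simp only [ee_same, ee_ne hne] at hcf
        norm_num at hcf
      exact hijeq ▸ Relation.ReflTransGen.refl
    · obtain ⟨mL, hdn⟩ := last_letter_descends hdiag hw (by omega)
      have hup : llen A (fun _ => True) w < llen A (fun _ => True) (w * simpleRefl A i) :=
        ascent_of_fix hdiag hoff hzero hw hij
      have hkm : i ≠ mL := by
        intro h
        rw [← h] at hdn
        omega
      obtain ⟨v, dd, hv, hdd, hwvd, hvlt, hvk, hvm, hdk⟩ := decomp hdiag hkm hw hup hdn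
      have hvinn := posRoot hdiag hoff hzero _ v hv rfl i hvk
      have hvmnn := posRoot hdiag hoff hzero _ v hv rfl mL hvm
      obtain ⟨c1, c2, hc1, hc2, hde⟩ := R2 hdiag hoff hzero hkm hdd hdk
      obtain ⟨ωv, hvlet, hωv⟩ := hv
      have hkey : ee j = c1 • v (ee i) + c2 • v (ee mL) := by
        rw [← hij, hwvd, mul_app, hde, ← hωv, wp_add, wp_smul, wp_smul]
      -- `dd (ee i) ≠ 0`
      obtain ⟨ωd, hdlet, hωd⟩ := hdd
      have hddne : ¬(c1 = 0 ∧ c2 = 0) := by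
        rintro ⟨rfl, rfl⟩
        have h0 : dd (ee i) = 0 := by
          rw [hde]
          module
        have h1 := wp_rev_apply' hdiag ωd (ee i)
        rw [hωd, h0, wp_zero] at h1
        have h2 := congrFun h1 i
        rw [ee_same] at h2
        norm_num at h2
      by_cases hc20 : c2 = 0
      · -- dd fixes αᵢ, recurse on v
        have hc1pos : 0 < c1 := by
          rcases lt_or_eq_of_le hc1 with h | h
          · exact h
          · exact absurd ⟨h.symm, hc20⟩ hddne
        have hXj : c1 * v (ee i) j = 1 := by
          have := congrFun hkey j
          rw [hc20] at this
          simpa [ee_same] using this.symm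
        rcases Int.mul_eq_one_iff_eq_one_or_neg_one.mp hXj with ⟨h1, _⟩ | ⟨h1, _⟩
        · have hvij : v (ee i) = ee j := by
            have h2 := hkey
            rw [hc20, h1] at h2
            simpa using h2.symm
          exact ih (llen A (fun _ => True) v) (by omega) v ⟨ωv, hvlet, hωv⟩ rfl i j hvij
        · omega
      · by_cases hc10 : c1 = 0
        · have hc2pos : 0 < c2 := lt_of_le_of_ne hc2 (Ne.symm hc20)
          have hder : dd (ee i) = c2 • ee mL := by
            rw [hde, hc10]
            module
          obtain ⟨hAim, hAmi, hc21⟩ :=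
            R3 hdiag hoff hkm ⟨ωd, hdlet, hωd⟩ hc2pos hder
          have hvmj : v (ee mL) = ee j := by
            have h2 := hkey
            rw [hc10, hc21] at h2
            simpa using h2.symm
          have hconn := ih (llen A (fun _ => True) v) (by omega) v ⟨ωv, hvlet, hωv⟩ rfl mL j hvmj
          exact Relation.ReflTransGen.head ⟨hAim, hAmi⟩ hconn
        · exfalso
          have hc1pos : 0 < c1 := lt_of_le_of_ne hc1 (Ne.symm hc10)
          have hc2pos : 0 < c2 := lt_of_le_of_ne hc2 (Ne.symm hc20)
          have hXzero : ∀ q, q ≠ j → v (ee i) q = 0 := by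
            intro q hq
            have h := congrFun hkey q
            rw [ee_ne hq] at h
            simp only [Pi.add_apply, Pi.smul_apply, smul_eq_mul] at h
            have h1 : c1 * v (ee i) q = 0 := by
              nlinarith [mul_nonneg hc1 (hvinn q), mul_nonneg hc2 (hvmnn q)]
            rcases mul_eq_zero.mp h1 with h2 | h2
            · omega
            · exact h2
          have hYzero : ∀ q, q ≠ j → v (ee mL) q = 0 := by
            intro q hq
            have h := congrFun hkey q
            rw [ee_ne hq] at h
            simp only [Pi.add_apply, Pi.smul_apply, smul_eq_mul] at h
            have h1 : c2 * v (ee mL) q = 0 := by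
              nlinarith [mul_nonneg hc1 (hvinn q), mul_nonneg hc2 (hvmnn q)]
            rcases mul_eq_zero.mp h1 with h2 | h2
            · omega
            · exact h2
          have hXj1 : 1 ≤ v (ee i) j := by
            rcases lt_or_ge 0 (v (ee i) j) with h | h
            · omega
            · exfalso
              have hX0 : v (ee i) = 0 := by
                funext q
                rcases eq_or_ne q j with rfl | hq
                · have := hvinn q
                  simp only [Pi.zero_apply]
                  omega
                · simpa using hXzero q hq
              have h1 := wp_rev_apply' hdiag ωv (ee i)
              rw [hωv, hX0, wp_zero] at h1
              have h2 := congrFun h1 i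
              rw [ee_same] at h2
              norm_num at h2
          have hYj1 : 1 ≤ v (ee mL) j := by
            rcases lt_or_ge 0 (v (ee mL) j) with h | h
            · omega
            · exfalso
              have hY0 : v (ee mL) = 0 := by
                funext q
                rcases eq_or_ne q j with rfl | hq
                · have := hvmnn q
                  simp only [Pi.zero_apply]
                  omega
                · simpa using hYzero q hq
              have h1 := wp_rev_apply' hdiag ωv (ee mL)
              rw [hωv, hY0, wp_zero] at h1
              have h2 := congrFun h1 mL
              rw [ee_same] at h2
              norm_num at h2
          have hj := congrFun hkey j
          rw [ee_same] at hj
          simp only [Pi.add_apply, Pi.smul_apply, smul_eq_mul] at hj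
          nlinarith [mul_le_mul_of_nonneg_left hXj1 (le_of_lt hc1pos),
            mul_le_mul_of_nonneg_left hYj1 (le_of_lt hc2pos)]

end MainProof

end Skel

/-- Main theorem: two simple roots `αᵢ`, `αⱼ` lie in the same Weyl group orbit if and
only if the vertices `i` and `j` are connected by a path of single edges in the Dynkin
diagram, i.e. lie in the same connected component of the skeleton `D*` (whose edges are
the pairs with `a_{ij} = a_{ji} = -1`). -/
theorem simple_roots_same_orbit_iff_skeleton_connected {l : ℕ}
    (A : Matrix (Fin l) (Fin l) ℤ)
    (hdiag : ∀ i, A i i = 2) (hoff : ∀ i j, i ≠ j → A i j ≤ 0)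
    (hzero : ∀ i j, A i j = 0 ↔ A j i = 0) (i j : Fin l) :
    (∃ w ∈ Submonoid.closure
        {w : Function.End (Fin l → ℤ) | ∃ k, w = simpleRefl A k},
      w (Pi.single i 1) = Pi.single j 1) ↔
    Relation.ReflTransGen (fun p q : Fin l => A p q = -1 ∧ A q p = -1) i j := by
  constructor
  · rintro ⟨w, hmem, hweq⟩
    refine Skel.mainForward hdiag hoff hzero _ w ?_ rfl i j hweq
    clear hweq
    induction hmem using Submonoid.closure_induction with
      | mem x hx =>
          obtain ⟨kk, rfl⟩ := hx
          exact ⟨[kk], by simp, Skel.wp_singleton A kk⟩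
      | one => exact ⟨[], by simp, rfl⟩
      | mul x y hx hy ihx ihy =>
          obtain ⟨ωx, _, hx'⟩ := ihx
          obtain ⟨ωy, _, hy'⟩ := ihy
          exact ⟨ωx ++ ωy, by simp, by rw [Skel.wp_append, hx', hy']⟩
  · intro hconn
    induction hconn with
    | refl => exact ⟨1, Submonoid.one_mem _, rfl⟩
    | @tail b c hab hbc ih =>
        obtain ⟨w, hwmem, hweq⟩ := ih
        refine ⟨(simpleRefl A b * simpleRefl A c) * w, ?_, ?_⟩
        · exact mul_mem (mul_mem (Submonoid.subset_closure ⟨b, rfl⟩)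
            (Submonoid.subset_closure ⟨c, rfl⟩)) hwmem
        · rw [Skel.mul_app, hweq]
          exact Skel.edge_step hdiag hbc.1 hbc.2
end
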